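/- arXiv:2306.00993 — 2 statements merged into one kernel-verified Lean document; each statement's English description precedes it below -/
import Mathlib

section
/- Quantum degenerate Garnier system G(1,1,3), commutativity of the two Hamiltonian flows (Theorem 4.1, case 3): define K1 = q1^2p1p2 + q2^2p1p2 − 2q1q2p1p2 + (t1−t2)(q1^2p1 − 2q1p1^2 − 2q2p1p2) + (2t1^2 − 2t1t2 − α3)q1p1 + α2·q1p2 + α3·q2p1 − α2·q2p2 + α2(t1−t2)q1 + 2α1(t1−t2)p1, and K2 = q1^2p1p2 + q2^2p1p2 − 2q1q2p1p2 − (t1−t2)(q2^2p2 − 2q2p2^2 − 2q1p1p2) − α3·q1p1 + α2·q1p2 + α3·q2p1 − (2t1t2 − 2t2^2 + α2)q2p2 − α3(t1−t2)q2 − 2α1(t1−t2)p2. Then K1·K2 = K2·K1; i.e. the quantum G(1,1,3) Hamiltonians H1 = K1/((h−α1−α2−α3−α4)(t1−t2)) and H2 = K2/((h−α1−α2−α3−α4)(t2−t1)), whose denominators are central, commute. -/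
/-!
Write `s = t₁ - t₂`. The Hamiltonians split as `K₁ = K₀ + s (L₁ + 2 t₁ q₁p₁)` and
`K₂ = K₀ - s (L₂ + 2 t₂ q₂p₂)` with `K₀`, `L₁`, `L₂` free of the times. Since `ad (qᵢpᵢ)`
multiplies a normally ordered monomial by `h` times its `pᵢ`-degree minus its `qᵢ`-degree,
`q₂p₂` commutes with `q₁p₁` and with `L₁`, `q₁p₁` with `L₂`, and `q₁p₁ + q₂p₂` with `K₀`.
Bilinearity then leaves `⁅K₁, K₂⁆ = -s ⁅K₀, L₁ + L₂⁆ - s² (⁅L₁, L₂⁆ - 2 ⁅q₁p₁, K₀⁆)`, and both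
brackets vanish by a normal-ordering computation in the Weyl algebra. The central parameters
are treated as scalars from the centre of the ring.
-/

section LieAssembly

variable {S L : Type*} [CommRing S] [LieRing L] [LieAlgebra S L]

theorem lie_add_smul_sub_smul_eq_zero {M A B E₁ E₂ : L} (t₁ t₂ : S)
    (hAE₂ : ⁅A, E₂⁆ = 0) (hE₁B : ⁅E₁, B⁆ = 0) (hE₁E₂ : ⁅E₁, E₂⁆ = 0)
    (hME : ⁅M, E₁ + E₂⁆ = 0) (hMAB : ⁅M, A + B⁆ = 0) (hAB : ⁅A, B⁆ = (2 : S) • ⁅E₁, M⁆) :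
    ⁅M + (t₁ - t₂) • (A + (2 * t₁) • E₁), M - (t₁ - t₂) • (B + (2 * t₂) • E₂)⁆ = 0 := by
  rw [lie_add] at hME hMAB
  rw [← lie_skew E₁ M] at hAB
  simp only [lie_add, add_lie, lie_sub, lie_smul, smul_lie, lie_self, ← lie_skew A M,
    ← lie_skew E₁ M]
  linear_combination (norm := module) (-(t₁ - t₂)) • hMAB - (2 * (t₁ - t₂) * t₂) • hME
    - (t₁ - t₂) ^ 2 • hAB - (2 * (t₁ - t₂) ^ 2 * t₂) • hAE₂ - (2 * (t₁ - t₂) ^ 2 * t₁) • hE₁B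
    - (4 * (t₁ - t₂) ^ 2 * t₁ * t₂) • hE₁E₂

end LieAssembly

namespace QuantumGarnier

attribute [local instance] LieRing.ofAssociativeRing

variable {S R : Type*} [CommRing S] [Ring R] [Algebra S R]

structure IsCCR (h : S) (q₁ p₁ q₂ p₂ : R) : Prop where
  lie_q₁_p₁ : ⁅q₁, p₁⁆ = algebraMap S R h
  lie_q₂_p₂ : ⁅q₂, p₂⁆ = algebraMap S R h
  commute_q₁_q₂ : Commute q₁ q₂
  commute_p₁_p₂ : Commute p₁ p₂
  commute_q₁_p₂ : Commute q₁ p₂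
  commute_q₂_p₁ : Commute q₂ p₁

theorem mul_eq_sub_of_lie_eq_algebraMap {q p : R} {h : S} (H : ⁅q, p⁆ = algebraMap S R h) :
    p * q = q * p - h • 1 := by
  rw [← Algebra.algebraMap_eq_smul_one, ← H, Ring.lie_def, sub_sub_cancel]

theorem mul_mul_eq_sub_of_lie_eq_algebraMap {q p : R} {h : S} (H : ⁅q, p⁆ = algebraMap S R h)
    (x : R) : p * (q * x) = q * (p * x) - h • x := by
  rw [← mul_assoc, mul_eq_sub_of_lie_eq_algebraMap H, sub_mul, smul_mul_assoc, one_mul, mul_assoc]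

/-- The rewriting system to the normal order `q₁ q₂ p₁ p₂` on right-associated products;
`simp` splits the conjunction into its rules. -/
theorem IsCCR.normalOrder {h : S} {q₁ p₁ q₂ p₂ : R} (H : IsCCR h q₁ p₁ q₂ p₂) :
    (p₁ * q₁ = q₁ * p₁ - h • 1 ∧ ∀ x, p₁ * (q₁ * x) = q₁ * (p₁ * x) - h • x) ∧
    (p₂ * q₂ = q₂ * p₂ - h • 1 ∧ ∀ x, p₂ * (q₂ * x) = q₂ * (p₂ * x) - h • x) ∧
    (q₂ * q₁ = q₁ * q₂ ∧ ∀ x, q₂ * (q₁ * x) = q₁ * (q₂ * x)) ∧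
    (p₂ * p₁ = p₁ * p₂ ∧ ∀ x, p₂ * (p₁ * x) = p₁ * (p₂ * x)) ∧
    (p₂ * q₁ = q₁ * p₂ ∧ ∀ x, p₂ * (q₁ * x) = q₁ * (p₂ * x)) ∧
    (p₁ * q₂ = q₂ * p₁ ∧ ∀ x, p₁ * (q₂ * x) = q₂ * (p₁ * x)) :=
  ⟨⟨mul_eq_sub_of_lie_eq_algebraMap H.lie_q₁_p₁, mul_mul_eq_sub_of_lie_eq_algebraMap H.lie_q₁_p₁⟩,
    ⟨mul_eq_sub_of_lie_eq_algebraMap H.lie_q₂_p₂, mul_mul_eq_sub_of_lie_eq_algebraMap H.lie_q₂_p₂⟩,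
    ⟨H.commute_q₁_q₂.symm.eq, H.commute_q₁_q₂.symm.left_comm⟩,
    ⟨H.commute_p₁_p₂.symm.eq, H.commute_p₁_p₂.symm.left_comm⟩,
    ⟨H.commute_q₁_p₂.symm.eq, H.commute_q₁_p₂.symm.left_comm⟩,
    ⟨H.commute_q₂_p₁.symm.eq, H.commute_q₂_p₁.symm.left_comm⟩⟩

section Hamiltonians

variable (α₁ α₂ α₃ t₁ t₂ : S) (q₁ p₁ q₂ p₂ : R)

def K₁ : R :=
  q₁ ^ 2 * p₁ * p₂ + q₂ ^ 2 * p₁ * p₂ - 2 * q₁ * q₂ * p₁ * p₂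
    + (t₁ - t₂) • (q₁ ^ 2 * p₁ - 2 * q₁ * p₁ ^ 2 - 2 * q₂ * p₁ * p₂)
    + (2 * t₁ ^ 2 - 2 * t₁ * t₂ - α₃) • (q₁ * p₁) + α₂ • (q₁ * p₂) + α₃ • (q₂ * p₁)
    - α₂ • (q₂ * p₂) + (α₂ * (t₁ - t₂)) • q₁ + (2 * α₁ * (t₁ - t₂)) • p₁

def K₂ : R :=
  q₁ ^ 2 * p₁ * p₂ + q₂ ^ 2 * p₁ * p₂ - 2 * q₁ * q₂ * p₁ * p₂
    - (t₁ - t₂) • (q₂ ^ 2 * p₂ - 2 * q₂ * p₂ ^ 2 - 2 * q₁ * p₁ * p₂)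
    - α₃ • (q₁ * p₁) + α₂ • (q₁ * p₂) + α₃ • (q₂ * p₁)
    - (2 * t₁ * t₂ - 2 * t₂ ^ 2 + α₂) • (q₂ * p₂) - (α₃ * (t₁ - t₂)) • q₂
    - (2 * α₁ * (t₁ - t₂)) • p₂

def K₀ : R :=
  q₁ ^ 2 * p₁ * p₂ + q₂ ^ 2 * p₁ * p₂ - 2 * q₁ * q₂ * p₁ * p₂
    - α₃ • (q₁ * p₁) + α₂ • (q₁ * p₂) + α₃ • (q₂ * p₁) - α₂ • (q₂ * p₂)

def L₁ : R := q₁ ^ 2 * p₁ - 2 * q₁ * p₁ ^ 2 - 2 * q₂ * p₁ * p₂ + α₂ • q₁ + (2 * α₁) • p₁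

def L₂ : R := q₂ ^ 2 * p₂ - 2 * q₂ * p₂ ^ 2 - 2 * q₁ * p₁ * p₂ + α₃ • q₂ + (2 * α₁) • p₂

theorem K₁_eq : K₁ α₁ α₂ α₃ t₁ t₂ q₁ p₁ q₂ p₂ =
    K₀ α₂ α₃ q₁ p₁ q₂ p₂ + (t₁ - t₂) • (L₁ α₁ α₂ q₁ p₁ q₂ p₂ + (2 * t₁) • (q₁ * p₁)) := by
  simp only [K₁, K₀, L₁]
  module

theorem K₂_eq : K₂ α₁ α₂ α₃ t₁ t₂ q₁ p₁ q₂ p₂ =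
    K₀ α₂ α₃ q₁ p₁ q₂ p₂ - (t₁ - t₂) • (L₂ α₁ α₃ q₁ p₁ q₂ p₂ + (2 * t₂) • (q₂ * p₂)) := by
  simp only [K₂, K₀, L₂]
  module

end Hamiltonians

variable {α₁ α₂ α₃ t₁ t₂ h : S} {q₁ p₁ q₂ p₂ : R}

theorem lie_q₁p₁_q₂p₂ (H : IsCCR h q₁ p₁ q₂ p₂) : ⁅q₁ * p₁, q₂ * p₂⁆ = 0 := by
  simp only [Ring.lie_def, mul_assoc, H.normalOrder]
  module

theorem lie_L₁_q₂p₂ (H : IsCCR h q₁ p₁ q₂ p₂) : ⁅L₁ α₁ α₂ q₁ p₁ q₂ p₂, q₂ * p₂⁆ = 0 := by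
  simp only [L₁, Ring.lie_def, sq, two_mul, mul_add, add_mul, mul_sub, sub_mul, smul_mul_assoc,
    mul_smul_comm, mul_assoc, add_smul, H.normalOrder]
  module

theorem lie_q₁p₁_L₂ (H : IsCCR h q₁ p₁ q₂ p₂) : ⁅q₁ * p₁, L₂ α₁ α₃ q₁ p₁ q₂ p₂⁆ = 0 := by
  simp only [L₂, Ring.lie_def, sq, two_mul, mul_add, add_mul, mul_sub, sub_mul, smul_mul_assoc,
    mul_smul_comm, mul_assoc, add_smul, H.normalOrder]
  module

theorem lie_K₀_q₁p₁_add_q₂p₂ (H : IsCCR h q₁ p₁ q₂ p₂) :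
    ⁅K₀ α₂ α₃ q₁ p₁ q₂ p₂, q₁ * p₁ + q₂ * p₂⁆ = 0 := by
  simp only [K₀, Ring.lie_def, sq, two_mul, mul_add, add_mul, mul_sub, sub_mul, smul_add,
    smul_sub, smul_mul_assoc, mul_smul_comm, mul_assoc, H.normalOrder]
  module

theorem lie_K₀_L₁_add_L₂ (H : IsCCR h q₁ p₁ q₂ p₂) :
    ⁅K₀ α₂ α₃ q₁ p₁ q₂ p₂, L₁ α₁ α₂ q₁ p₁ q₂ p₂ + L₂ α₁ α₃ q₁ p₁ q₂ p₂⁆ = 0 := by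
  simp only [K₀, L₁, L₂, Ring.lie_def, sq, two_mul, mul_add, add_mul, mul_sub, sub_mul, smul_add,
    smul_sub, smul_mul_assoc, mul_smul_comm, mul_assoc, mul_one, add_smul, H.normalOrder]
  module

theorem lie_L₁_L₂ (H : IsCCR h q₁ p₁ q₂ p₂) :
    ⁅L₁ α₁ α₂ q₁ p₁ q₂ p₂, L₂ α₁ α₃ q₁ p₁ q₂ p₂⁆ = (2 : S) • ⁅q₁ * p₁, K₀ α₂ α₃ q₁ p₁ q₂ p₂⁆ := by
  simp only [K₀, L₁, L₂, Ring.lie_def, sq, two_mul, mul_add, add_mul, mul_sub, sub_mul, smul_add,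
    smul_sub, smul_mul_assoc, mul_smul_comm, mul_assoc, mul_one, add_smul, H.normalOrder]
  module

theorem commute_K₁_K₂ (H : IsCCR h q₁ p₁ q₂ p₂) :
    Commute (K₁ α₁ α₂ α₃ t₁ t₂ q₁ p₁ q₂ p₂) (K₂ α₁ α₂ α₃ t₁ t₂ q₁ p₁ q₂ p₂) := by
  rw [commute_iff_lie_eq, K₁_eq, K₂_eq]
  apply lie_add_smul_sub_smul_eq_zero
  exacts [lie_L₁_q₂p₂ H, lie_q₁p₁_L₂ H, lie_q₁p₁_q₂p₂ H, lie_K₀_q₁p₁_add_q₂p₂ H,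
    lie_K₀_L₁_add_L₂ H, lie_L₁_L₂ H]

end QuantumGarnier

theorem quantum_garnier_G113_commute_general
    {R : Type*} [Ring R]
    (h α1 α2 α3 t1 t2 : R)
    (hh : ∀ r : R, h * r = r * h)
    (hA1 : ∀ r : R, α1 * r = r * α1)
    (hA2 : ∀ r : R, α2 * r = r * α2)
    (hA3 : ∀ r : R, α3 * r = r * α3)
    (ht1 : ∀ r : R, t1 * r = r * t1)
    (ht2 : ∀ r : R, t2 * r = r * t2)
    (q1 p1 q2 p2 : R)
    (hq1p1 : q1 * p1 - p1 * q1 = h)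
    (hq2p2 : q2 * p2 - p2 * q2 = h)
    (hq1q2 : q1 * q2 - q2 * q1 = 0)
    (hp1p2 : p1 * p2 - p2 * p1 = 0)
    (hq1p2 : q1 * p2 - p2 * q1 = 0)
    (hq2p1 : q2 * p1 - p1 * q2 = 0)
    (K1 K2 : R)
    (hK1 : K1 =
      q1^2 * p1 * p2 + q2^2 * p1 * p2 - 2 * q1 * q2 * p1 * p2
      + (t1 - t2) * (q1^2 * p1 - 2 * q1 * p1^2 - 2 * q2 * p1 * p2)
      + (2 * t1^2 - 2 * t1 * t2 - α3) * q1 * p1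
      + α2 * q1 * p2
      + α3 * q2 * p1
      - α2 * q2 * p2
      + α2 * (t1 - t2) * q1
      + 2 * α1 * (t1 - t2) * p1)
    (hK2 : K2 =
      q1^2 * p1 * p2 + q2^2 * p1 * p2 - 2 * q1 * q2 * p1 * p2
      - (t1 - t2) * (q2^2 * p2 - 2 * q2 * p2^2 - 2 * q1 * p1 * p2)
      - α3 * q1 * p1
      + α2 * q1 * p2
      + α3 * q2 * p1
      - (2 * t1 * t2 - 2 * t2^2 + α2) * q2 * p2
      - α3 * (t1 - t2) * q2
      - 2 * α1 * (t1 - t2) * p2) :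
    K1 * K2 = K2 * K1 := by
  have mem_center {c : R} (hc : ∀ r, c * r = r * c) : c ∈ Subring.center R :=
    Subring.mem_center_iff.2 fun r => (hc r).symm
  have algebraMap_mk {c : R} (hc : c ∈ Subring.center R) :
      algebraMap (Subring.center R) R ⟨c, hc⟩ = c := rfl
  have H : QuantumGarnier.IsCCR (⟨h, mem_center hh⟩ : Subring.center R) q1 p1 q2 p2 :=
    ⟨hq1p1, hq2p2, sub_eq_zero.1 hq1q2, sub_eq_zero.1 hp1p2, sub_eq_zero.1 hq1p2,
      sub_eq_zero.1 hq2p1⟩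
  have key := (QuantumGarnier.commute_K₁_K₂ (α₁ := ⟨α1, mem_center hA1⟩)
    (α₂ := ⟨α2, mem_center hA2⟩) (α₃ := ⟨α3, mem_center hA3⟩) (t₁ := ⟨t1, mem_center ht1⟩)
    (t₂ := ⟨t2, mem_center ht2⟩) H).eq
  simp only [QuantumGarnier.K₁, QuantumGarnier.K₂, Algebra.smul_def, map_sub, map_add, map_mul,
    map_pow, map_ofNat] at key
  -- a separate pass: `algebraMap_mk` also matches the compound scalars before they are split
  simp only [algebraMap_mk] at key
  subst hK1 hK2
  simpa only [mul_assoc] using key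

/-- Quantum degenerate Garnier system G(1,1,3): commutativity of the two Hamiltonian flows. -/
theorem quantum_garnier_G113_commute
    {R : Type*} [Ring R]
    (h α1 α2 α3 α4 t1 t2 : R)
    (hh : ∀ r : R, h * r = r * h)
    (hA1 : ∀ r : R, α1 * r = r * α1)
    (hA2 : ∀ r : R, α2 * r = r * α2)
    (hA3 : ∀ r : R, α3 * r = r * α3)
    (hA4 : ∀ r : R, α4 * r = r * α4)
    (ht1 : ∀ r : R, t1 * r = r * t1)
    (ht2 : ∀ r : R, t2 * r = r * t2)
    (q1 p1 q2 p2 : R)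
    (hq1p1 : q1 * p1 - p1 * q1 = h)
    (hq2p2 : q2 * p2 - p2 * q2 = h)
    (hq1q2 : q1 * q2 - q2 * q1 = 0)
    (hp1p2 : p1 * p2 - p2 * p1 = 0)
    (hq1p2 : q1 * p2 - p2 * q1 = 0)
    (hq2p1 : q2 * p1 - p1 * q2 = 0)
    (K1 K2 : R)
    (hK1 : K1 =
      q1^2 * p1 * p2 + q2^2 * p1 * p2 - 2 * q1 * q2 * p1 * p2
      + (t1 - t2) * (q1^2 * p1 - 2 * q1 * p1^2 - 2 * q2 * p1 * p2)
      + (2 * t1^2 - 2 * t1 * t2 - α3) * q1 * p1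
      + α2 * q1 * p2
      + α3 * q2 * p1
      - α2 * q2 * p2
      + α2 * (t1 - t2) * q1
      + 2 * α1 * (t1 - t2) * p1)
    (hK2 : K2 =
      q1^2 * p1 * p2 + q2^2 * p1 * p2 - 2 * q1 * q2 * p1 * p2
      - (t1 - t2) * (q2^2 * p2 - 2 * q2 * p2^2 - 2 * q1 * p1 * p2)
      - α3 * q1 * p1
      + α2 * q1 * p2
      + α3 * q2 * p1
      - (2 * t1 * t2 - 2 * t2^2 + α2) * q2 * p2
      - α3 * (t1 - t2) * q2
      - 2 * α1 * (t1 - t2) * p2) :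
    K1 * K2 = K2 * K1 :=
  quantum_garnier_G113_commute_general h α1 α2 α3 t1 t2 hh hA1 hA2 hA3 ht1 ht2 q1 p1 q2 p2 hq1p1
    hq2p2 hq1q2 hp1p2 hq1p2 hq2p1 K1 K2 hK1 hK2
end

section
/- The transformation r3 of the quantum degenerate Garnier system G(1,1,1,2) is a quantum canonical transformation: suppose x1 is a unit of R, and define q1 = x1, p1 = η·x1^{-2}(x2 − 1) − α1·x1^{-1} + y1, q2 = x2, p2 = −η·x1^{-1} + y2. Then (q1, p1, q2, p2) again satisfy the canonical commutation relations: [q1,p1] = [q2,p2] = h and [q1,q2] = [p1,p2] = [q1,p2] = [q2,p1] = 0. -/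
/-!
The new momenta are `pᵢ = yᵢ + ∂ᵢV` for the potential `V = -η (x₂ - 1) x₁⁻¹ - α₁ log x₁`, a function
of the positions alone. Hence every bracket involving a position is unchanged, and
`[p₁, p₂] = [∂₁V, y₂] + [y₁, ∂₂V] = h (∂₂∂₁V - ∂₁∂₂V) = 0`. In the ring this is a bracket
computation by bilinearity and the Leibniz rule, the only non-trivial input being
`[y₁, x₁⁻¹] = x₁⁻¹ h x₁⁻¹`.
-/

namespace Ring

variable {R : Type*} [Ring R]

theorem lie_mul (a b c : R) : ⁅a, b * c⁆ = ⁅a, b⁆ * c + b * ⁅a, c⁆ := by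
  simp only [lie_def]; noncomm_ring

theorem mul_lie (a b c : R) : ⁅a * b, c⁆ = a * ⁅b, c⁆ + ⁅a, c⁆ * b := by
  simp only [lie_def]; noncomm_ring

theorem lie_inv_right {a a' : R} (hl : a' * a = 1) (hr : a * a' = 1) (b : R) :
    ⁅b, a'⁆ = a' * ⁅a, b⁆ * a' := by
  rw [lie_def, lie_def, mul_sub, sub_mul]
  simp only [mul_assoc, hr, mul_one]
  simp only [← mul_assoc, hl, one_mul]

end Ring

/-- The transformation r3 of the quantum degenerate Garnier system G(1,1,1,2) is a
quantum canonical transformation. -/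
theorem quantum_garnier_G1112_r3_canonical
    {R : Type*} [Ring R]
    (h η α1 : R)
    (hh : ∀ r : R, h * r = r * h)
    (hη : ∀ r : R, η * r = r * η)
    (hA1 : ∀ r : R, α1 * r = r * α1)
    (x1 y1 x2 y2 : R)
    (hx1y1 : x1 * y1 - y1 * x1 = h)
    (hx2y2 : x2 * y2 - y2 * x2 = h)
    (hx1x2 : x1 * x2 - x2 * x1 = 0)
    (hy1y2 : y1 * y2 - y2 * y1 = 0)
    (hx1y2 : x1 * y2 - y2 * x1 = 0)
    (hx2y1 : x2 * y1 - y1 * x2 = 0)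
    (x1i : R) (hx1il : x1i * x1 = 1) (hx1ir : x1 * x1i = 1)
    (q1 p1 q2 p2 : R)
    (hq1 : q1 = x1)
    (hp1 : p1 = η * x1i^2 * (x2 - 1) - α1 * x1i + y1)
    (hq2 : q2 = x2)
    (hp2 : p2 = -(η * x1i) + y2) :
    q1 * p1 - p1 * q1 = h ∧ q2 * p2 - p2 * q2 = h ∧
    q1 * q2 - q2 * q1 = 0 ∧ p1 * p2 - p2 * p1 = 0 ∧
    q1 * p2 - p2 * q1 = 0 ∧ q2 * p1 - p1 * q2 = 0 := by
  -- a proof-local instance: declared globally it would alter how the statement elaborates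
  let _ : LieRing R := LieRing.ofAssociativeRing
  subst q1 p1 q2 p2
  simp only [← Ring.lie_def] at *
  have hη_left (r : R) : ⁅η, r⁆ = 0 := Commute.lie_eq (hη r)
  have hη_right (r : R) : ⁅r, η⁆ = 0 := Commute.lie_eq (hη r).symm
  have hα1_left (r : R) : ⁅α1, r⁆ = 0 := Commute.lie_eq (hA1 r)
  have hα1_right (r : R) : ⁅r, α1⁆ = 0 := Commute.lie_eq (hA1 r).symm
  have hone_left (r : R) : ⁅(1 : R), r⁆ = 0 := (Commute.one_left r).lie_eq
  have hone_right (r : R) : ⁅r, (1 : R)⁆ = 0 := (Commute.one_right r).lie_eq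
  have hx1x1i : ⁅x1, x1i⁆ = 0 := by rw [Ring.lie_def, hx1il, hx1ir, sub_self]
  have hx2x1i : ⁅x2, x1i⁆ = 0 := by rw [Ring.lie_inv_right hx1il hx1ir, hx1x2, mul_zero, zero_mul]
  have hx1iy2 : ⁅x1i, y2⁆ = 0 := by
    rw [← lie_skew, Ring.lie_inv_right hx1il hx1ir, hx1y2, mul_zero, zero_mul, neg_zero]
  have hy1x1i : ⁅y1, x1i⁆ = x1i * h * x1i := by rw [Ring.lie_inv_right hx1il hx1ir, hx1y1]
  refine ⟨?_, ?_, hx1x2, ?_, ?_, ?_⟩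
  all_goals simp only [pow_two, lie_add, add_lie, lie_sub, sub_lie, lie_neg, Ring.lie_mul,
    Ring.mul_lie, lie_self, hη_left, hη_right, hα1_left, hα1_right, hone_left, hone_right,
    hx1x1i, hx2x1i, hx1iy2, hy1x1i, hx1y1, hx2y2, hx1x2, hy1y2, hx1y2, hx2y1,
    mul_zero, zero_mul, add_zero, zero_add, sub_zero, neg_zero]
  rw [mul_assoc x1i h, hh x1i]
  noncomm_ring
end
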